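/- arXiv:2005.07671 — 3 statements merged into one kernel-verified Lean document; each statement's English description precedes it below -/
import Mathlib

section
/- Let μ ≠ 0, ρ ∈ ℝ, and let κ : I → ℝ be a C² function on an interval I satisfying (e^{μκ})'' + (κ² - κ/μ + ρ)e^{μκ} = 0. Then the function s ↦ (μ⁴·κ'(s)² + (μκ(s) - 1)² + ρμ²)·e^{2μκ(s)} is constant on I. Equivalently, there exists d ∈ ℝ with μ⁴ κ'² = d·e^{-2μκ} - (μκ - 1)² - ρμ² on I. -/
/-! The derivative of `F = (μ⁴ κ'² + (μκ - 1)² + ρμ²) e^{2μκ}` equals `2μ³ κ' e^{μκ}` times the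
Euler–Lagrange expression `(e^{μκ})'' + (κ² - κ/μ + ρ) e^{μκ}`, so `F` is constant on any interval
where that expression vanishes. -/

open Real Filter Topology

noncomputable def firstIntegral (μ ρ : ℝ) (κ : ℝ → ℝ) (s : ℝ) : ℝ :=
  (μ ^ 4 * deriv κ s ^ 2 + (μ * κ s - 1) ^ 2 + ρ * μ ^ 2) * exp (2 * μ * κ s)

theorem hasDerivAt_exp_const_mul_comp {κ : ℝ → ℝ} {κ' s : ℝ} (c : ℝ) (h : HasDerivAt κ κ' s) :
    HasDerivAt (fun t => exp (c * κ t)) (c * κ' * exp (c * κ s)) s := by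
  simpa only [mul_comm, mul_left_comm] using (h.const_mul c).exp

theorem deriv_deriv_exp_const_mul_comp {κ : ℝ → ℝ} {s : ℝ} (μ : ℝ)
    (hκ : ∀ᶠ t in 𝓝 s, DifferentiableAt ℝ κ t) (hκ' : DifferentiableAt ℝ (deriv κ) s) :
    deriv (deriv fun t => exp (μ * κ t)) s =
      (μ * deriv (deriv κ) s + μ ^ 2 * deriv κ s ^ 2) * exp (μ * κ s) := by
  have hfirst : deriv (fun t => exp (μ * κ t)) =ᶠ[𝓝 s] fun t => μ * deriv κ t * exp (μ * κ t) :=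
    hκ.mono fun t ht => (hasDerivAt_exp_const_mul_comp μ ht.hasDerivAt).deriv
  rw [hfirst.deriv_eq, ((hκ'.hasDerivAt.const_mul μ).fun_mul
    (hasDerivAt_exp_const_mul_comp μ hκ.self_of_nhds.hasDerivAt)).deriv]
  ring

theorem hasDerivAt_firstIntegral {μ : ℝ} (ρ : ℝ) (hμ : μ ≠ 0) {κ : ℝ → ℝ} {s : ℝ}
    (hκ : ∀ᶠ t in 𝓝 s, DifferentiableAt ℝ κ t) (hκ' : DifferentiableAt ℝ (deriv κ) s) :
    HasDerivAt (firstIntegral μ ρ κ)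
      (2 * μ ^ 3 * deriv κ s * exp (μ * κ s) *
        (deriv (deriv fun t => exp (μ * κ t)) s + (κ s ^ 2 - κ s / μ + ρ) * exp (μ * κ s))) s := by
  have hκs := hκ.self_of_nhds.hasDerivAt
  have hF := (((hκ'.hasDerivAt.fun_pow 2).const_mul (μ ^ 4)).fun_add
    (((hκs.const_mul μ).sub_const 1).fun_pow 2) |>.add_const (ρ * μ ^ 2)).fun_mul
    (hasDerivAt_exp_const_mul_comp (2 * μ) hκs)
  have hexp : exp (2 * μ * κ s) = exp (μ * κ s) * exp (μ * κ s) := by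
    rw [← exp_add]; ring_nf
  rw [deriv_deriv_exp_const_mul_comp μ hκ hκ']
  refine hF.congr_deriv ?_
  rw [hexp]
  field_simp
  push_cast
  ring

theorem first_integral (μ ρ : ℝ) (hμ : μ ≠ 0) (I : Set ℝ) (hI : IsOpen I)
    (hconv : Convex ℝ I) (κ : ℝ → ℝ) (hκ : ContDiffOn ℝ 2 κ I)
    (hEL : ∀ s ∈ I,
      deriv (deriv (fun t => Real.exp (μ * κ t))) s
        + (κ s ^ 2 - κ s / μ + ρ) * Real.exp (μ * κ s) = 0) :
    ∃ d : ℝ, ∀ s ∈ I,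
      (μ ^ 4 * (deriv κ s) ^ 2 + (μ * κ s - 1) ^ 2 + ρ * μ ^ 2)
        * Real.exp (2 * μ * κ s) = d ∧
      μ ^ 4 * (deriv κ s) ^ 2
        = d * Real.exp (-(2 * μ * κ s)) - (μ * κ s - 1) ^ 2 - ρ * μ ^ 2 := by
  have hdiff : ∀ s ∈ I, DifferentiableAt ℝ κ s := fun s hs =>
    (hκ.differentiableOn (by norm_num)).differentiableAt (hI.mem_nhds hs)
  have hκ' : ContDiffOn ℝ 1 (deriv κ) I := hκ.deriv_of_isOpen hI (by norm_num)
  have hdiff' : ∀ s ∈ I, DifferentiableAt ℝ (deriv κ) s := fun s hs =>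
    (hκ'.differentiableOn (by norm_num)).differentiableAt (hI.mem_nhds hs)
  have hF : ∀ s ∈ I, HasDerivAt (firstIntegral μ ρ κ) 0 s := fun s hs => by
    simpa only [hEL s hs, mul_zero] using
      hasDerivAt_firstIntegral ρ hμ (eventually_of_mem (hI.mem_nhds hs) hdiff) (hdiff' s hs)
  obtain ⟨d, hd⟩ := hI.exists_is_const_of_deriv_eq_zero hconv.isPreconnected
    (fun s hs => (hF s hs).differentiableAt.differentiableWithinAt) (fun s hs => (hF s hs).deriv)
  refine ⟨d, fun s hs => ⟨hd s hs, ?_⟩⟩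
  rw [← hd s hs, firstIntegral, exp_neg]
  field_simp
  ring
end

section
/- Let μ ≠ 0 and κ : ℝ → ℝ a C² solution of (e^{μκ})'' + (κ² - κ/μ)e^{μκ} = 0 (the case ρ = 0) with first-integral constant d. For λ > 0 define κ̃(s) = κ(s/λ)/λ. Then κ̃ solves the Euler–Lagrange equation of Θ_{λμ} with ρ = 0, and its first-integral constant equals d; namely ((λμ)⁴ κ̃'² + (λμ κ̃ - 1)²)·e^{2λμκ̃} = (μ⁴κ'² + (μκ-1)²)·e^{2μκ} as functions (after the reparametrization s ↦ s/λ). -/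
lemma deriv_comp_div' (h : ℝ → ℝ) (hd : Differentiable ℝ h) (c : ℝ) (hc : c ≠ 0) (s : ℝ) :
    deriv (fun t => h (t / c)) s = deriv h (s / c) / c := by
  have h1 : HasDerivAt (fun t : ℝ => t / c) (1 / c) s := by
    simpa using (hasDerivAt_id s).div_const c
  have h2 : HasDerivAt (fun t => h (t / c)) (deriv h (s / c) * (1 / c)) s :=
    ((hd (s / c)).hasDerivAt).comp s h1
  rw [h2.deriv]; ring

theorem dilation_invariance (μ : ℝ) (hμ : μ ≠ 0) (κ : ℝ → ℝ) (hκ : ContDiff ℝ 2 κ)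
    (hEL : ∀ s : ℝ,
      deriv (deriv (fun t => Real.exp (μ * κ t))) s
        + (κ s ^ 2 - κ s / μ) * Real.exp (μ * κ s) = 0)
    (lam : ℝ) (hlam : 0 < lam) :
    (∀ s : ℝ,
      deriv (deriv (fun t => Real.exp ((lam * μ) * (κ (t / lam) / lam)))) s
        + ((κ (s / lam) / lam) ^ 2 - (κ (s / lam) / lam) / (lam * μ))
          * Real.exp ((lam * μ) * (κ (s / lam) / lam)) = 0) ∧
    (∀ s : ℝ,
      ((lam * μ) ^ 4 * (deriv (fun t => κ (t / lam) / lam) s) ^ 2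
          + ((lam * μ) * (κ (s / lam) / lam) - 1) ^ 2)
        * Real.exp (2 * (lam * μ) * (κ (s / lam) / lam))
      = (μ ^ 4 * (deriv κ (s / lam)) ^ 2 + (μ * κ (s / lam) - 1) ^ 2)
        * Real.exp (2 * μ * κ (s / lam))) := by
  have hl : lam ≠ 0 := ne_of_gt hlam
  have hκd : Differentiable ℝ κ := hκ.differentiable (by norm_num)
  set f : ℝ → ℝ := fun t => Real.exp (μ * κ t) with hf
  have hfC : ContDiff ℝ 2 f := Real.contDiff_exp.comp (contDiff_const.mul hκ)
  have hfd : Differentiable ℝ f := hfC.differentiable (by norm_num)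
  have hfd' : Differentiable ℝ (deriv f) := by
    have := (contDiff_succ_iff_deriv.mp (by norm_num at hfC ⊢; exact hfC : ContDiff ℝ (1 + 1) f)).2.2
    exact this.differentiable (by norm_num)
  have key : (fun t => Real.exp ((lam * μ) * (κ (t / lam) / lam))) = fun t => f (t / lam) := by
    funext t
    have : (lam * μ) * (κ (t / lam) / lam) = μ * κ (t / lam) := by field_simp
    rw [this]
  have hg1 : ∀ s, deriv (fun t => f (t / lam)) s = deriv f (s / lam) / lam :=
    fun s => deriv_comp_div' f hfd lam hl s
  have hg2 : ∀ s, deriv (deriv (fun t => f (t / lam))) s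
      = deriv (deriv f) (s / lam) / lam / lam := by
    intro s
    have e1 : deriv (fun t => f (t / lam)) = fun t => (fun u => deriv f u / lam) (t / lam) := by
      funext t; exact hg1 t
    rw [e1, deriv_comp_div' _ (hfd'.div_const lam) lam hl s]
    congr 1
    simp [deriv_div_const]
  constructor
  · intro s
    rw [key, hg2 s]
    have hexp : (lam * μ) * (κ (s / lam) / lam) = μ * κ (s / lam) := by field_simp
    rw [hexp]
    have := hEL (s / lam)
    have h2 : deriv (deriv f) (s / lam) = -((κ (s / lam) ^ 2 - κ (s / lam) / μ) * Real.exp (μ * κ (s / lam))) := by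
      rw [hf]; linarith
    rw [h2]
    field_simp
    ring
  · intro s
    have e1 : (fun t => κ (t / lam) / lam) = fun t => (fun u => κ u / lam) (t / lam) := rfl
    have hd : deriv (fun t => κ (t / lam) / lam) s = deriv κ (s / lam) / lam / lam := by
      rw [e1, deriv_comp_div' _ (hκd.div_const lam) lam hl s]
      congr 1
      simp [deriv_div_const]
    rw [hd]
    have hexp : 2 * (lam * μ) * (κ (s / lam) / lam) = 2 * μ * κ (s / lam) := by field_simp
    rw [hexp]
    field_simp
end

section
/- Fix μ ≠ 0 and ρ ∈ ℝ. The function F(x,y) = μ²y² + (log x - 1)²x² + ρμ²x², defined for x > 0, is a conserved quantity of the system x' = y, y' = -(x/μ²)(log²x - log x + ρμ²): along any solution (x(s), y(s)) with x(s) > 0, the value F(x(s), y(s)) is constant. -/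
/-!
With `m = μ²` the system is Newton's equation `m x'' = -V'(x)` for the potential
`V(x) = ((log x - 1)² + ρμ²) x² / 2`, whose derivative is `x (log² x - log x + ρμ²)`
(because `(log x - 1)² + (log x - 1) = (log x - 1) log x`). The given quantity is twice the
energy `m y² / 2 + V(x)`, whose derivative along solutions vanishes.
-/

open Real

theorem newton_energy_eq {m : ℝ} (hm : m ≠ 0) {V V' x y : ℝ → ℝ}
    (hV : ∀ s, HasDerivAt V (V' (x s)) (x s))
    (hx : ∀ s, HasDerivAt x (y s) s) (hy : ∀ s, HasDerivAt y (-V' (x s) / m) s) (s t : ℝ) :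
    m * y s ^ 2 / 2 + V (x s) = m * y t ^ 2 / 2 + V (x t) := by
  let E : ℝ → ℝ := fun s => m * y s ^ 2 / 2 + V (x s)
  have hE : ∀ s, HasDerivAt E 0 s := by
    intro s
    refine ((((hy s).pow 2).const_mul m).div_const 2 |>.add ((hV s).comp s (hx s))).congr_deriv ?_
    field_simp
    ring
  exact is_const_of_deriv_eq_zero (fun s => (hE s).differentiableAt) (fun s => (hE s).deriv) s t

theorem hasDerivAt_log_sub_one_sq_add_mul_sq_div_two (c : ℝ) {x : ℝ} (hx : 0 < x) :
    HasDerivAt (fun x => ((log x - 1) ^ 2 + c) * x ^ 2 / 2)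
      (x * (log x ^ 2 - log x + c)) x := by
  refine (((((hasDerivAt_log hx.ne').sub_const 1).pow 2).add_const c).mul
    (hasDerivAt_pow 2 x) |>.div_const 2).congr_deriv ?_
  simp only [Pi.pow_apply]
  field_simp
  ring

theorem conserved_quantity (μ ρ : ℝ) (hμ : μ ≠ 0) (x y : ℝ → ℝ)
    (hx : Differentiable ℝ x) (hy : Differentiable ℝ y)
    (hpos : ∀ s, 0 < x s)
    (hx' : ∀ s, deriv x s = y s)
    (hy' : ∀ s, deriv y s
      = -(x s / μ ^ 2) * ((Real.log (x s)) ^ 2 - Real.log (x s) + ρ * μ ^ 2)) :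
    ∀ s t : ℝ,
      μ ^ 2 * (y s) ^ 2 + (Real.log (x s) - 1) ^ 2 * (x s) ^ 2 + ρ * μ ^ 2 * (x s) ^ 2
      = μ ^ 2 * (y t) ^ 2 + (Real.log (x t) - 1) ^ 2 * (x t) ^ 2 + ρ * μ ^ 2 * (x t) ^ 2 := by
  intro s t
  have energy := newton_energy_eq (pow_ne_zero 2 hμ)
    (V' := fun x => x * (log x ^ 2 - log x + ρ * μ ^ 2)) (x := x) (y := y)
    (fun s => hasDerivAt_log_sub_one_sq_add_mul_sq_div_two (ρ * μ ^ 2) (hpos s))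
    (fun s => hx' s ▸ (hx s).hasDerivAt)
    (fun s => (hy s).hasDerivAt.congr_deriv (by rw [hy' s]; ring)) s t
  linear_combination 2 * energy
end
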